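/- If ρ ∈ M satisfies c(ρ) = 1, then the operator δ'(u) = e^α·(δ(u) − u) is the ρ-conjugate of δ: for every u ∈ ℤ[M], e^α·(δ(u) − u) = e^ρ·δ(e^{−ρ}·u). (This is the rank-one case of the identity ∂'_w = e^ρ ∂_w e^{−ρ}.) -/

import Mathlib

/-!
Both sides, multiplied by `1 - e^{-α}`, equal `u - s(u)`: for the left side this is the
defining relation of `δ` at `u`, for the right side the relation at `e^{-ρ} u` together with
`s(e^{-ρ}) = e^{α - ρ}`, which is where `c(ρ) = 1` enters. Since `M` is a free `ℤ`-module, `ℤ[M]`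
has no zero divisors, and `1 - e^{-α} ≠ 0` can be cancelled.
-/

open AddMonoidAlgebra

noncomputable section

/-- The reflection `λ ↦ λ - c(λ) • α` associated to a root `α` and coroot `c`,
as an additive homomorphism of the weight lattice `M`. -/
def demazureReflection {M : Type*} [AddCommGroup M] (α : M) (c : M →+ ℤ) : M →+ M where
  toFun := fun lam => lam - c lam • α
  map_zero' := by simp
  map_add' := fun x y => by simp only [map_add, add_smul]; abel

/-- The ring endomorphism of the group algebra `ℤ[M]` induced by the reflection
`s(λ) = λ - c(λ)·α`; it sends `e^λ` to `e^{s(λ)}`. -/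
def demazureReflectionAlg {M : Type*} [AddCommGroup M] (α : M) (c : M →+ ℤ) :
    AddMonoidAlgebra ℤ M →+* AddMonoidAlgebra ℤ M :=
  mapDomainRingHom ℤ (demazureReflection α c)

theorem Module.Free.twoUniqueSums (R M : Type*) [Semiring R] [TwoUniqueSums R]
    [AddCommMonoid M] [Module R M] [Module.Free R M] : TwoUniqueSums M :=
  .of_injective_addHom _ (Module.Free.chooseBasis R M).repr.injective inferInstance

theorem AddMonoidAlgebra.one_sub_single_ne_zero {R M : Type*} [Ring R] [Nontrivial R]
    [AddMonoid M] {a : M} (ha : a ≠ 0) : (1 : AddMonoidAlgebra R M) - single a 1 ≠ 0 := by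
  rw [sub_ne_zero, one_def, Ne, single_left_inj one_ne_zero]
  exact ha.symm

theorem AddMonoidAlgebra.single_mul_single_neg {R M : Type*} [Semiring R] [AddGroup M] (m : M) :
    single m (1 : R) * single (-m) 1 = 1 := by
  rw [single_mul_single, add_neg_cancel, mul_one, one_def]

section Demazure

variable {M : Type*} [AddCommGroup M] {α : M} {c : M →+ ℤ}

theorem demazureReflectionAlg_single (m : M) (r : ℤ) :
    demazureReflectionAlg α c (single m r) = single (m - c m • α) r :=
  mapDomain_single

theorem demazure_prime_mul_eq_sub_reflection {u d : AddMonoidAlgebra ℤ M}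
    (h : (1 - single (-α) 1) * d = u - single (-α) 1 * demazureReflectionAlg α c u) :
    (1 - single (-α) 1) * (single α 1 * (d - u)) = u - demazureReflectionAlg α c u := by
  linear_combination single α (1 : ℤ) * h + (u - demazureReflectionAlg α c u) *
    single_mul_single_neg (R := ℤ) α

theorem demazure_conj_mul_eq_sub_reflection {ρ : M} (hρ : c ρ = 1) {u d : AddMonoidAlgebra ℤ M}
    (h : (1 - single (-α) 1) * d =
      single (-ρ) 1 * u - single (-α) 1 * demazureReflectionAlg α c (single (-ρ) 1 * u)) :
    (1 - single (-α) 1) * (single ρ 1 * d) = u - demazureReflectionAlg α c u := by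
  have hs : demazureReflectionAlg α c (single (-ρ) 1) = single (-ρ + α) 1 := by
    rw [demazureReflectionAlg_single, map_neg, hρ, neg_one_zsmul, sub_neg_eq_add]
  have hunit : single ρ (1 : ℤ) * (single (-α) 1 * single (-ρ + α) 1) = 1 := by
    rw [single_mul_single, single_mul_single, show ρ + (-α + (-ρ + α)) = 0 by abel, mul_one,
      mul_one, one_def]
  rw [map_mul, hs] at h
  linear_combination single ρ (1 : ℤ) * h + u * single_mul_single_neg (R := ℤ) ρ -
    demazureReflectionAlg α c u * hunit

end Demazure

theorem demazure_prime_rho_conjugate_general {M : Type*} [AddCommGroup M]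
    [Module.Free ℤ M]
    (α : M) (hα : α ≠ 0) (c : M →+ ℤ)
    (δ : AddMonoidAlgebra ℤ M →ₗ[ℤ] AddMonoidAlgebra ℤ M)
    (hδ : ∀ u : AddMonoidAlgebra ℤ M,
      (1 - single (-α) 1) * δ u = u - single (-α) 1 * demazureReflectionAlg α c u)
    (ρ : M) (hρ : c ρ = 1) :
    ∀ u : AddMonoidAlgebra ℤ M,
      single α 1 * (δ u - u) = single ρ 1 * δ (single (-ρ) 1 * u) := by
  intro u
  have := Module.Free.twoUniqueSums ℤ M
  apply mul_left_cancel₀ (one_sub_single_ne_zero (neg_ne_zero.mpr hα))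
  rw [demazure_prime_mul_eq_sub_reflection (hδ u), demazure_conj_mul_eq_sub_reflection hρ (hδ _)]

/-- If c(ρ) = 1 then δ'(u) = e^α (δ(u) - u) equals the ρ-conjugate e^ρ δ(e^{-ρ} u). -/
theorem demazure_prime_rho_conjugate {M : Type*} [AddCommGroup M]
    [Module.Free ℤ M] [Module.Finite ℤ M]
    (α : M) (hα : α ≠ 0) (c : M →+ ℤ) (hc : c α = 2)
    (δ : AddMonoidAlgebra ℤ M →ₗ[ℤ] AddMonoidAlgebra ℤ M)
    (hδ : ∀ u : AddMonoidAlgebra ℤ M,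
      (1 - single (-α) 1) * δ u = u - single (-α) 1 * demazureReflectionAlg α c u)
    (ρ : M) (hρ : c ρ = 1) :
    ∀ u : AddMonoidAlgebra ℤ M,
      single α 1 * (δ u - u) = single ρ 1 * δ (single (-ρ) 1 * u) :=
  demazure_prime_rho_conjugate_general α hα c δ hδ ρ hρ
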